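/- Let g = 2r with r ≥ 2, and let G_1 = π_g / N(ℬ^g_1). Then for every 1 ≤ k ≤ r the images of the words b_k b_{k+1} ⋯ b_{g−k} b_{g+1−k} c_{g+1−k} and b_{k+1} b_{k+2} ⋯ b_{g−k} c_{g−k} in G_1 are trivial. -/

import Mathlib

namespace Paper

/-- The free group `F_g` on the `2g` generators `a_1, b_1, …, a_g, b_g`
(the pair `(i, false)` is `a_{i+1}`, the pair `(i, true)` is `b_{i+1}`). -/
abbrev F (g : ℕ) := FreeGroup (Fin g × Bool)

/-- The generator `a_i` of `F_g`, for `1 ≤ i ≤ g`; by convention `a_i = 1` for out-of-range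
indices (in particular `a_{g+1} = 1`). -/
def a (g i : ℕ) : F g :=
  if h : 1 ≤ i ∧ i ≤ g then FreeGroup.of (⟨i - 1, by omega⟩, false) else 1

/-- The generator `b_i` of `F_g`, for `1 ≤ i ≤ g`. -/
def b (g i : ℕ) : F g :=
  if h : 1 ≤ i ∧ i ≤ g then FreeGroup.of (⟨i - 1, by omega⟩, true) else 1

/-- The word `c_i = b_i⁻¹ ⋯ b_2⁻¹ b_1⁻¹ (a_1 b_1 a_1⁻¹)(a_2 b_2 a_2⁻¹) ⋯ (a_i b_i a_i⁻¹)`,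
with `c_0 = 1`. -/
def c (g i : ℕ) : F g :=
  (((List.range i).reverse.map fun j => (b g (j + 1))⁻¹).prod) *
    (((List.range i).map fun j => a g (j + 1) * b g (j + 1) * (a g (j + 1))⁻¹).prod)

/-- The product `b_i b_{i+1} ⋯ b_j`. -/
def prodb (g i j : ℕ) : F g := ((List.range (j + 1 - i)).map fun l => b g (i + l)).prod

/-- `B^h_{0,1} = b_1 b_2 ⋯ b_h`. -/
def B01 (g h : ℕ) : F g := prodb g 1 h

/-- `B^h_{0,2} = b_1 b_2 ⋯ b_h · c_h a_{h+1}`. -/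
def B02 (g h : ℕ) : F g := prodb g 1 h * c g h * a g (h + 1)

/-- `B^h_{0,s}` for `s = 1, 2`. -/
def B0 (g s h : ℕ) : F g := if s = 1 then B01 g h else B02 g h

/-- `B^h_{2k-1} = a_k · b_k b_{k+1} ⋯ b_{h+1-k} · c_{h+1-k} a_{h+1-k}`. -/
def Bodd (g h k : ℕ) : F g :=
  a g k * prodb g k (h + 1 - k) * c g (h + 1 - k) * a g (h + 1 - k)

/-- `B^h_{2k} = a_k · b_{k+1} b_{k+2} ⋯ b_{h-k} · c_{h-k} a_{h+1-k}`. -/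
def Beven (g h k : ℕ) : F g :=
  a g k * prodb g (k + 1) (h - k) * c g (h - k) * a g (h + 1 - k)

/-- The set of words `ℬ^h_s`: it consists of `B^h_{0,s}, B^h_1, …, B^h_h` (the odd-indexed
`B^h_{2k-1}` for `2k - 1 ≤ h` and the even-indexed `B^h_{2k}` for `2k ≤ h`), together with
`a_{r+1}` and `c_r a_{r+1}` when `h = 2r + 1` is odd. -/
def Bset (g s h : ℕ) : Set (F g) :=
  {B0 g s h}
    ∪ {w | ∃ k, 1 ≤ k ∧ 2 * k - 1 ≤ h ∧ w = Bodd g h k}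
    ∪ {w | ∃ k, 1 ≤ k ∧ 2 * k ≤ h ∧ w = Beven g h k}
    ∪ (if h % 2 = 1 then {a g (h / 2 + 1), c g (h / 2) * a g (h / 2 + 1)} else (∅ : Set (F g)))

/-- The genus-`g` surface group `π_g`, presented with generators `a_1, b_1, …, a_g, b_g`
and the single relator `c_g`. -/
abbrev pi (g : ℕ) := PresentedGroup ({c g g} : Set (F g))

/-- The natural projection `F_g → π_g`. -/
abbrev toPi (g : ℕ) : F g →* pi g := PresentedGroup.mk _

/-- The quotient of `π_g` by the normal closure of the images of a set `S` of words. -/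
abbrev quotBy (g : ℕ) (S : Set (F g)) :=
  pi g ⧸ Subgroup.normalClosure (toPi g '' S)

/-- The projection `π_g → π_g / N(S)`. -/
abbrev projBy (g : ℕ) (S : Set (F g)) : pi g →* quotBy g S :=
  QuotientGroup.mk' _

/-!
Write `P_k = b_k ⋯ b_{g+1-k} c_{g+1-k}` and `Q_k = b_{k+1} ⋯ b_{g-k} c_{g-k}`. The relators
`B_{2k-1} = a_k P_k a_{g+1-k}` and `B_{2k} = a_k Q_k a_{g+1-k}` share their outer letters, so
`P_k = Q_k` in `G_1`. Since `Q_k = P_{k+1}` as words and `P_1 = B_{0,1} c_g = 1`, induction on `k`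
kills all of them.
-/

theorem _root_.MonoidHom.eq_of_map_mul_mul_eq_one {G H : Type*} [Group G] [Group H] (φ : G →* H)
    {u x y v : G} (hx : φ (u * x * v) = 1) (hy : φ (u * y * v) = 1) : φ x = φ y := by
  simp only [map_mul] at hx hy
  exact mul_left_cancel (mul_right_cancel (hx.trans hy.symm))

section Relators

variable {g : ℕ}

theorem projBy_toPi_of_mem {S : Set (F g)} {w : F g} (hw : w ∈ S) :
    projBy g S (toPi g w) = 1 :=
  (QuotientGroup.eq_one_iff _).mpr (Subgroup.subset_normalClosure ⟨w, hw, rfl⟩)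

theorem toPi_c_self : toPi g (c g g) = 1 :=
  (QuotientGroup.eq_one_iff _).mpr (Subgroup.subset_normalClosure rfl)

theorem B0_mem_Bset (s h : ℕ) : B0 g s h ∈ Bset g s h :=
  Or.inl (Or.inl (Or.inl rfl))

theorem Bodd_mem_Bset (s : ℕ) {h k : ℕ} (hk : 1 ≤ k) (hkh : 2 * k - 1 ≤ h) :
    Bodd g h k ∈ Bset g s h :=
  Or.inl (Or.inl (Or.inr ⟨k, hk, hkh, rfl⟩))

theorem Beven_mem_Bset (s : ℕ) {h k : ℕ} (hk : 1 ≤ k) (hkh : 2 * k ≤ h) :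
    Beven g h k ∈ Bset g s h :=
  Or.inl (Or.inr ⟨k, hk, hkh, rfl⟩)

theorem projBy_prodb_mul_c_step (s : ℕ) {h k : ℕ} (hk : 1 ≤ k) (hkh : 2 * k ≤ h) :
    projBy g (Bset g s h) (toPi g (prodb g k (h + 1 - k) * c g (h + 1 - k))) =
      projBy g (Bset g s h) (toPi g (prodb g (k + 1) (h - k) * c g (h - k))) := by
  have hodd := projBy_toPi_of_mem (Bodd_mem_Bset (g := g) (h := h) s hk (by omega))
  have heven := projBy_toPi_of_mem (Beven_mem_Bset (g := g) s hk hkh)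
  rw [Bodd, mul_assoc (a g k)] at hodd
  rw [Beven, mul_assoc (a g k)] at heven
  exact ((projBy g _).comp (toPi g)).eq_of_map_mul_mul_eq_one hodd heven

theorem projBy_prodb_mul_c_one :
    projBy g (Bset g 1 g) (toPi g (prodb g 1 g * c g g)) = 1 := by
  have hB := projBy_toPi_of_mem (B0_mem_Bset (g := g) 1 g)
  rw [B0, if_pos rfl, B01] at hB
  rw [map_mul, map_mul, hB, toPi_c_self, map_one, one_mul]

end Relators

theorem G1_b_chain_relations_general (r g : ℕ) (hg : g = 2 * r) :
    ∀ k, 1 ≤ k → k ≤ r →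
      projBy g (Bset g 1 g) (toPi g (prodb g k (g + 1 - k) * c g (g + 1 - k))) = 1 ∧
      projBy g (Bset g 1 g) (toPi g (prodb g (k + 1) (g - k) * c g (g - k))) = 1 := by
  have hP : ∀ k, 1 ≤ k → k ≤ r →
      projBy g (Bset g 1 g) (toPi g (prodb g k (g + 1 - k) * c g (g + 1 - k))) = 1 := by
    intro k hk hkr
    induction k, hk using Nat.le_induction with
    | base => rw [Nat.add_sub_cancel]; exact projBy_prodb_mul_c_one
    | succ n hn ih =>
      rw [show g + 1 - (n + 1) = g - n by omega,
        ← projBy_prodb_mul_c_step 1 hn (by omega)]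
      exact ih (by omega)
  intro k hk hkr
  exact ⟨hP k hk hkr, (projBy_prodb_mul_c_step 1 hk (by omega)).symm.trans (hP k hk hkr)⟩

/-- For `g = 2r` with `r ≥ 2`, in `G_1 = π_g / N(ℬ^g_1)` the images of the
words `b_k b_{k+1} ⋯ b_{g-k} b_{g+1-k} c_{g+1-k}` and `b_{k+1} b_{k+2} ⋯ b_{g-k} c_{g-k}` are
trivial for every `1 ≤ k ≤ r`. -/
theorem G1_b_chain_relations (r g : ℕ) (hr : 2 ≤ r) (hg : g = 2 * r) :
    ∀ k, 1 ≤ k → k ≤ r →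
      projBy g (Bset g 1 g) (toPi g (prodb g k (g + 1 - k) * c g (g + 1 - k))) = 1 ∧
      projBy g (Bset g 1 g) (toPi g (prodb g (k + 1) (g - k) * c g (g - k))) = 1 :=
  G1_b_chain_relations_general r g hg

end Paper
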